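/- There exist real polynomials g₁, g₂, g₃ of degree 2k (for any k ≥ 1) such that each of g₂ - g₁, g₃ - g₁, g₃ - g₂ is a degree-2k polynomial with 2k simple non-real roots, and the resulting 6k roots are pairwise distinct. -/
import Mathlib

open Polynomial

private lemma sf_aux (n : ℕ) (hn : n ≠ 0) (a : ℝ) (ha : a ≠ 0) :
    Squarefree ((X : ℝ[X]) ^ n - C a) :=
  (separable_X_pow_sub_C a (Nat.cast_ne_zero.mpr hn) ha).squarefree

private lemma eval_pos (k : ℕ) (x c : ℝ) (hc : 0 < c) : 0 < x ^ (2 * k) + c := by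
  have h : (0:ℝ) ≤ x ^ (2 * k) := by rw [pow_mul]; positivity
  linarith

/-- for any `k ≥ 1` there exist real polynomials `g₁, g₂, g₃` of
degree `2k` such that each of `g₂ - g₁`, `g₃ - g₁`, `g₃ - g₂` is a degree-`2k`
polynomial with `2k` simple non-real roots (squarefree and without real roots),
and the resulting `6k` complex roots are pairwise distinct (no two of the three
differences share a root). -/
theorem exists_three_pseudoline_data (k : ℕ) (hk : 1 ≤ k) :
    ∃ g1 g2 g3 : Polynomial ℝ,
      g1.natDegree = 2 * k ∧ g2.natDegree = 2 * k ∧ g3.natDegree = 2 * k ∧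
      ((g2 - g1).natDegree = 2 * k ∧ Squarefree (g2 - g1) ∧
        ∀ x : ℝ, (g2 - g1).eval x ≠ 0) ∧
      ((g3 - g1).natDegree = 2 * k ∧ Squarefree (g3 - g1) ∧
        ∀ x : ℝ, (g3 - g1).eval x ≠ 0) ∧
      ((g3 - g2).natDegree = 2 * k ∧ Squarefree (g3 - g2) ∧
        ∀ x : ℝ, (g3 - g2).eval x ≠ 0) ∧
      (∀ z : ℂ, ¬(Polynomial.aeval z (g2 - g1) = 0 ∧
        Polynomial.aeval z (g3 - g1) = 0)) ∧
      (∀ z : ℂ, ¬(Polynomial.aeval z (g2 - g1) = 0 ∧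
        Polynomial.aeval z (g3 - g2) = 0)) ∧
      (∀ z : ℂ, ¬(Polynomial.aeval z (g3 - g1) = 0 ∧
        Polynomial.aeval z (g3 - g2) = 0)) := by
  have hn : 2 * k ≠ 0 := by omega
  have hk0 : k ≠ 0 := by omega
  refine ⟨X ^ (2 * k) + C 4, 2 * X ^ (2 * k) + C 5, 3 * X ^ (2 * k) + C 7, ?_, ?_, ?_, ?_, ?_,
    ?_, ?_, ?_, ?_⟩
  · compute_degree! <;> simp [hk0]
  · compute_degree! <;> simp [hk0]
  · compute_degree! <;> simp [hk0]
  · have e : (2 * X ^ (2*k) + C 5 : ℝ[X]) - (X ^ (2*k) + C 4) = X ^ (2*k) - C (-1) := by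
      simp only [map_ofNat, map_neg, map_one]; ring
    rw [e]
    refine ⟨?_, sf_aux _ hn _ (by norm_num), fun x => ?_⟩
    · compute_degree! <;> simp [hk0]
    · have := eval_pos k x 1 one_pos
      simp only [eval_sub, eval_pow, eval_X, eval_C]
      intro h; rw [sub_eq_zero] at h; nlinarith
  · have e : (3 * X ^ (2*k) + C 7 : ℝ[X]) - (X ^ (2*k) + C 4) = C 2 * (X ^ (2*k) - C (-3/2)) := by
      rw [mul_sub, ← C_mul]
      norm_num [map_ofNat]
      ring
    rw [e]
    have hsf : Squarefree ((X : ℝ[X]) ^ (2*k) - C (-3/2)) := sf_aux _ hn _ (by norm_num)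
    have hu : IsUnit (C (2:ℝ)) := isUnit_C.mpr (by norm_num)
    refine ⟨?_, ?_, fun x => ?_⟩
    · rw [natDegree_mul (hu.ne_zero) (fun h => by simpa [h] using hsf.ne_zero)]
      rw [natDegree_C]; rw [zero_add]; compute_degree! <;> simp [hk0]
    · rw [mul_comm]
      exact ((separable_X_pow_sub_C (-3/2 : ℝ) (Nat.cast_ne_zero.mpr hn)
        (by norm_num)).mul_unit hu).squarefree
    · have := eval_pos k x (3/2) (by norm_num)
      simp only [eval_mul, eval_sub, eval_pow, eval_X, eval_C]
      intro h
      rcases mul_eq_zero.mp h with h | h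
      · norm_num at h
      · rw [sub_eq_zero] at h; nlinarith
  · have e : (3 * X ^ (2*k) + C 7 : ℝ[X]) - (2 * X ^ (2*k) + C 5) = X ^ (2*k) - C (-2) := by
      simp only [map_ofNat, map_neg]; ring
    rw [e]
    refine ⟨?_, sf_aux _ hn _ (by norm_num), fun x => ?_⟩
    · compute_degree! <;> simp [hk0]
    · have := eval_pos k x 2 two_pos
      simp only [eval_sub, eval_pow, eval_X, eval_C]
      intro h; rw [sub_eq_zero] at h; nlinarith
  · intro z ⟨h1, h2⟩
    simp only [map_sub, map_add, map_mul, map_pow, aeval_X, aeval_C, map_ofNat] at h1 h2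
    have : (1:ℂ) = 0 := by linear_combination h2 - 2*h1
    simp at this
  · intro z ⟨h1, h2⟩
    simp only [map_sub, map_add, map_mul, map_pow, aeval_X, aeval_C, map_ofNat] at h1 h2
    have : (1:ℂ) = 0 := by linear_combination h2 - h1
    simp at this
  · intro z ⟨h1, h2⟩
    simp only [map_sub, map_add, map_mul, map_pow, aeval_X, aeval_C, map_ofNat] at h1 h2
    have : (1:ℂ) = 0 := by linear_combination 2*h2 - h1
    simp at this
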